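/- arXiv:2103.11475 — 3 statements merged into one kernel-verified Lean document; each statement's English description precedes it below -/
import Mathlib

section
/- (Garcia's inequality, case p = 2.) There exists a constant C₂ > 0 such that for any k ≥ 1 and any real numbers x₁,…,x_k with x₁ + … + x_k = 0, the average over all permutations σ of {1,…,k} of max_{1≤i≤k} |x_{σ(1)} + … + x_{σ(i)}|² is at most C₂ ∑_{i=1}^k x_i². -/
/-!
Reading `x (σ 0), x (σ 1), …` for a uniformly random permutation `σ` is sampling without
replacement. Given the first `n` draws, the next one has conditional mean
`-S n / (k - n)`, where `S n` is the `n`-th partial sum, so `S n / (k - n)` is a martingale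
for `n < k`. Doob's `L²` maximal inequality bounds the mean of `max_{n ≤ m} (S n / (k - n))²`
by four times the mean of `(S m / (k - m))²`, which is at most `∑ xᵢ² / (k - m)²`; as
`|S n| ≤ k |S n / (k - n)|`, this controls the partial sums up to `m = k / 2`. Reversing the permutation turns `S n`
into `-S (k - n)` and handles `n ≥ k / 2`, giving the constant `4 · 2² + 4 · 3² = 52`.
-/

open Finset
open scoped Nat

/-- Pathwise form of Doob's `L²` maximal inequality. -/
theorem sq_partialSups_le (a : ℕ → ℝ) (m : ℕ) :
    partialSups a m ^ 2 ≤
      4 * a m ^ 2 - 4 * ∑ i ∈ range m, partialSups a i * (a (i + 1) - a i) := by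
  -- the left side below equals `-a 0 ^ 2` at `m = 0` and never increases with `m`
  suffices h : partialSups a m ^ 2 - 2 * partialSups a m * a m
      + 2 * ∑ i ∈ range m, partialSups a i * (a (i + 1) - a i) ≤ 0 by
    nlinarith [sq_nonneg (partialSups a m - 2 * a m)]
  induction m with
  | zero => simp only [partialSups_zero, range_zero, sum_empty]; nlinarith [sq_nonneg (a 0)]
  | succ m ih =>
    rw [sum_range_succ, ← Order.succ_eq_add_one, partialSups_succ, Order.succ_eq_add_one]
    rcases le_total (a (m + 1)) (partialSups a m) with h | h
    · rw [sup_eq_left.mpr h]; linear_combination ih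
    · rw [sup_eq_right.mpr h]
      linear_combination ih + sq_nonneg (a (m + 1) - partialSups a m)

namespace Garcia

variable {k : ℕ}

def partialSum (x : Fin k → ℝ) (σ : Equiv.Perm (Fin k)) (n : ℕ) : ℝ :=
  ∑ j ∈ univ.filter (fun j : Fin k => (j : ℕ) < n), x (σ j)

/-- The analogue, for a uniformly random permutation, of measurability with respect to the
first `n` draws `σ 0, …, σ (n - 1)`. -/
def DependsOnPrefix (n : ℕ) (f : Equiv.Perm (Fin k) → ℝ) : Prop :=
  ∀ σ τ : Equiv.Perm (Fin k), (∀ j : Fin k, (j : ℕ) < n → σ j = τ j) → f σ = f τ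

section PartialSum

variable (x : Fin k → ℝ) (σ : Equiv.Perm (Fin k))

@[simp]
theorem partialSum_zero : partialSum x σ 0 = 0 := by
  simp [partialSum]

theorem partialSum_succ {n : ℕ} (hn : n < k) :
    partialSum x σ (n + 1) = partialSum x σ n + x (σ ⟨n, hn⟩) := by
  have : univ.filter (fun j : Fin k => (j : ℕ) < n + 1)
      = insert ⟨n, hn⟩ (univ.filter (fun j : Fin k => (j : ℕ) < n)) := by
    ext j
    simp only [mem_filter, mem_univ, true_and, mem_insert, Fin.ext_iff]
    omega
  rw [partialSum, this, sum_insert (by simp), add_comm]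
  rfl

theorem sum_tail_eq_sub_partialSum (n : ℕ) :
    ∑ j ∈ univ.filter (fun j : Fin k => n ≤ (j : ℕ)), x (σ j) = ∑ i, x i - partialSum x σ n := by
  rw [eq_sub_iff_add_eq, partialSum, add_comm, ← Equiv.sum_comp σ x]
  simpa only [not_lt] using sum_filter_add_sum_filter_not univ (fun j : Fin k => (j : ℕ) < n) _

theorem partialSum_of_le {n : ℕ} (hn : k ≤ n) : partialSum x σ n = ∑ i, x i := by
  have := sum_tail_eq_sub_partialSum x σ n
  rw [filter_false_of_mem fun j _ => by omega, sum_empty] at this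
  linarith

theorem partialSum_mul_revPerm {n : ℕ} (hn : n ≤ k) :
    partialSum x (σ * Fin.revPerm) n = ∑ i, x i - partialSum x σ (k - n) := by
  rw [← sum_tail_eq_sub_partialSum, partialSum]
  refine sum_equiv Fin.revPerm (fun j => ?_) (fun j _ => rfl)
  simp only [mem_filter, mem_univ, true_and, Fin.revPerm_apply, Fin.val_rev]
  omega

theorem dependsOnPrefix_partialSum (n : ℕ) : DependsOnPrefix n (partialSum x · n) :=
  fun _ _ h => sum_congr rfl fun j hj => by rw [h j (mem_filter.mp hj).2]

end PartialSum

theorem DependsOnPrefix.sum_mul_apply_eq {n : ℕ} {f : Equiv.Perm (Fin k) → ℝ}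
    (hf : DependsOnPrefix n f) (g : Fin k → ℝ) {l l' : Fin k} (hl : n ≤ l) (hl' : n ≤ l') :
    ∑ σ, f σ * g (σ l) = ∑ σ, f σ * g (σ l') := by
  -- right multiplication by the transposition `(l l')` fixes the prefix and moves `l` to `l'`
  refine Fintype.sum_equiv (Equiv.mulRight (Equiv.swap l l')) _ _ fun σ => ?_
  have hfix : ∀ j : Fin k, (j : ℕ) < n → (σ * Equiv.swap l l') j = σ j := fun j hj => by
    rw [Equiv.Perm.mul_apply, Equiv.swap_apply_of_ne_of_ne (by omega) (by omega)]
  simp [hf _ _ hfix]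

theorem DependsOnPrefix.sum_mul_apply {n : ℕ} {f : Equiv.Perm (Fin k) → ℝ}
    (hf : DependsOnPrefix n f) (x : Fin k → ℝ) (hn : n < k) :
    (k - n : ℝ) * ∑ σ, f σ * x (σ ⟨n, hn⟩) = ∑ σ, f σ * (∑ i, x i - partialSum x σ n) := by
  have hcard : #(univ.filter fun j : Fin k => n ≤ (j : ℕ)) = k - n := by
    have := card_filter_add_card_filter_not (s := univ) (fun j : Fin k => (j : ℕ) < n)
    simp only [Fin.card_filter_val_lt, card_univ, Fintype.card_fin, not_lt] at this
    omega
  calc (k - n : ℝ) * ∑ σ, f σ * x (σ ⟨n, hn⟩)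
      = ∑ l ∈ univ.filter (fun j : Fin k => n ≤ (j : ℕ)), ∑ σ, f σ * x (σ l) := by
        rw [← Nat.cast_sub hn.le, ← hcard, ← nsmul_eq_mul, ← sum_const]
        exact sum_congr rfl fun l hl => hf.sum_mul_apply_eq x le_rfl (mem_filter.mp hl).2
    _ = ∑ σ, f σ * (∑ i, x i - partialSum x σ n) := by
        rw [sum_comm]
        simp only [← mul_sum, sum_tail_eq_sub_partialSum]

theorem card_mul_sum_apply (g : Fin k → ℝ) (l : Fin k) :
    k * ∑ σ : Equiv.Perm (Fin k), g (σ l) = k ! * ∑ i, g i := by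
  have hf : DependsOnPrefix 0 (fun _ : Equiv.Perm (Fin k) => (1 : ℝ)) := fun _ _ _ => rfl
  calc (k : ℝ) * ∑ σ : Equiv.Perm (Fin k), g (σ l)
      = ∑ _l' : Fin k, ∑ σ : Equiv.Perm (Fin k), g (σ l) := by simp
    _ = ∑ l' : Fin k, ∑ σ : Equiv.Perm (Fin k), g (σ l') := by
        refine sum_congr rfl fun l' _ => ?_
        simpa using hf.sum_mul_apply_eq g (Nat.zero_le l) (Nat.zero_le l')
    _ = k ! * ∑ i, g i := by
        rw [sum_comm]
        simp [Equiv.sum_comp, Fintype.card_perm]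

theorem card_mul_sum_sq_partialSum_le {x : Fin k → ℝ} (hx : ∑ i, x i = 0) {m : ℕ} (hm : m ≤ k) :
    k * ∑ σ, partialSum x σ m ^ 2 ≤ m * (k ! * ∑ i, x i ^ 2) := by
  induction m with
  | zero => simp
  | succ n ih =>
    have hn : n < k := hm
    have hcross : ∑ σ, partialSum x σ n * x (σ ⟨n, hn⟩) ≤ 0 := by
      have hmean := (dependsOnPrefix_partialSum x n).sum_mul_apply x hn
      simp only [hx, zero_sub, mul_neg, sum_neg_distrib, ← sq] at hmean
      have hkn : (0 : ℝ) < k - n := by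
        rw [sub_pos]
        exact_mod_cast hn
      have hsq : 0 ≤ ∑ σ, partialSum x σ n ^ 2 := sum_nonneg fun σ _ => sq_nonneg _
      nlinarith
    have hdiag := card_mul_sum_apply (fun i => x i ^ 2) ⟨n, hn⟩
    have hexpand : ∑ σ, partialSum x σ (n + 1) ^ 2 = ∑ σ, partialSum x σ n ^ 2
        + 2 * ∑ σ, partialSum x σ n * x (σ ⟨n, hn⟩)
        + ∑ σ : Equiv.Perm (Fin k), x (σ ⟨n, hn⟩) ^ 2 := by
      simp only [partialSum_succ x _ hn, mul_sum, ← sum_add_distrib]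
      exact sum_congr rfl fun σ _ => by ring
    rw [hexpand]
    push_cast
    nlinarith [ih hn.le, mul_nonpos_of_nonneg_of_nonpos (Nat.cast_nonneg k) hcross]

/-- Since `-partialSum x σ n / (k - n)` is the mean of the `k - n` values not yet drawn,
this is a martingale in `n < k` when `∑ i, x i = 0` (at `n = k` it is `0` by division by zero). -/
noncomputable def scaledPartialSum (x : Fin k → ℝ) (σ : Equiv.Perm (Fin k)) (n : ℕ) : ℝ :=
  partialSum x σ n / (k - n)

theorem dependsOnPrefix_scaledPartialSum (x : Fin k → ℝ) (n : ℕ) :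
    DependsOnPrefix n (scaledPartialSum x · n) := fun σ τ h => by
  simp only [scaledPartialSum, dependsOnPrefix_partialSum x n σ τ h]

theorem DependsOnPrefix.sum_mul_scaledPartialSum_succ {n : ℕ} {f : Equiv.Perm (Fin k) → ℝ}
    (hf : DependsOnPrefix n f) {x : Fin k → ℝ} (hx : ∑ i, x i = 0) (hn : n + 1 < k) :
    ∑ σ, f σ * scaledPartialSum x σ (n + 1) = ∑ σ, f σ * scaledPartialSum x σ n := by
  have hmean := hf.sum_mul_apply x (by omega)
  simp only [hx, zero_sub, mul_neg, sum_neg_distrib] at hmean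
  have hkn : (k - n : ℝ) ≠ 0 := by
    rw [sub_ne_zero]
    exact_mod_cast (by omega : k ≠ n)
  have hkn1 : (k - (n + 1) : ℝ) ≠ 0 := by
    rw [sub_ne_zero]
    exact_mod_cast (by omega : k ≠ n + 1)
  simp only [scaledPartialSum, partialSum_succ x _ (by omega : n < k), mul_div_assoc', ← sum_div,
    mul_add, sum_add_distrib]
  push_cast
  rw [div_eq_div_iff hkn1 hkn]
  linear_combination hmean

theorem DependsOnPrefix.sum_mul_abs_scaledPartialSum_le {n : ℕ} {f : Equiv.Perm (Fin k) → ℝ}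
    (hf : DependsOnPrefix n f) (hf0 : ∀ σ, 0 ≤ f σ) {x : Fin k → ℝ} (hx : ∑ i, x i = 0)
    (hn : n + 1 < k) :
    ∑ σ, f σ * |scaledPartialSum x σ n| ≤ ∑ σ, f σ * |scaledPartialSum x σ (n + 1)| := by
  have hg : DependsOnPrefix n fun σ => f σ * SignType.sign (scaledPartialSum x σ n) :=
    fun σ τ h => by simp only [hf σ τ h, dependsOnPrefix_scaledPartialSum x n σ τ h]
  have hsign : ∀ a b : ℝ, SignType.sign a * b ≤ |b| := fun a b => by
    rcases lt_trichotomy a 0 with ha | rfl | ha <;> simp [*, le_abs_self, neg_le_abs]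
  calc ∑ σ, f σ * |scaledPartialSum x σ n|
      = ∑ σ, f σ * SignType.sign (scaledPartialSum x σ n) * scaledPartialSum x σ n := by
        simp only [mul_assoc, sign_mul_self]
    _ = ∑ σ, f σ * SignType.sign (scaledPartialSum x σ n) * scaledPartialSum x σ (n + 1) :=
        (hg.sum_mul_scaledPartialSum_succ hx hn).symm
    _ ≤ ∑ σ, f σ * |scaledPartialSum x σ (n + 1)| := sum_le_sum fun σ _ => by
        rw [mul_assoc]
        exact mul_le_mul_of_nonneg_left (hsign _ _) (hf0 σ)

theorem sum_sq_partialSups_abs_scaledPartialSum_le {x : Fin k → ℝ} (hx : ∑ i, x i = 0) {m : ℕ}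
    (hm : m < k) :
    ∑ σ, partialSups (fun n => |scaledPartialSum x σ n|) m ^ 2
      ≤ 4 * ∑ σ, scaledPartialSum x σ m ^ 2 := by
  set a : Equiv.Perm (Fin k) → ℕ → ℝ := fun σ n => |scaledPartialSum x σ n|
  have hcross : ∀ i ∈ range m, 0 ≤ ∑ σ, partialSups (a σ) i * (a σ (i + 1) - a σ i) := by
    intro i hi
    have hf : DependsOnPrefix i fun σ => partialSups (a σ) i := fun σ τ h => by
      simp only [partialSups_apply]
      refine sup'_congr _ rfl fun j hj => ?_
      have hji : j ≤ i := mem_Iic.mp hj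
      simp only [a, dependsOnPrefix_scaledPartialSum x j σ τ fun l hl => h l (by omega)]
    have hf0 : ∀ σ, 0 ≤ partialSups (a σ) i :=
      fun σ => (abs_nonneg _).trans (le_partialSups_of_le (a σ) (Nat.zero_le i))
    simp only [mul_sub, sum_sub_distrib, sub_nonneg]
    exact hf.sum_mul_abs_scaledPartialSum_le hf0 hx (by simp at hi; omega)
  calc ∑ σ, partialSups (a σ) m ^ 2
      ≤ ∑ σ, (4 * a σ m ^ 2 - 4 * ∑ i ∈ range m, partialSups (a σ) i * (a σ (i + 1) - a σ i)) :=
        sum_le_sum fun σ _ => sq_partialSups_le (a σ) m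
    _ = 4 * ∑ σ, scaledPartialSum x σ m ^ 2
          - 4 * ∑ i ∈ range m, ∑ σ, partialSups (a σ) i * (a σ (i + 1) - a σ i) := by
        rw [sum_sub_distrib, ← mul_sum, ← mul_sum, sum_comm (s := univ)]
        simp only [a, sq_abs]
    _ ≤ 4 * ∑ σ, scaledPartialSum x σ m ^ 2 := by linarith [sum_nonneg hcross]

theorem sq_partialSum_le_mul_partialSups (x : Fin k → ℝ) (σ : Equiv.Perm (Fin k)) {m n : ℕ}
    (hnm : n ≤ m) (hnk : n < k) :
    partialSum x σ n ^ 2 ≤ k ^ 2 * partialSups (fun j => |scaledPartialSum x σ j|) m ^ 2 := by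
  have hkn : (0 : ℝ) < k - n := by
    rw [sub_pos]
    exact_mod_cast hnk
  have habs : |partialSum x σ n| = (k - n) * |scaledPartialSum x σ n| := by
    rw [scaledPartialSum, abs_div, abs_of_pos hkn, mul_div_cancel₀ _ hkn.ne']
  have hle : |partialSum x σ n| ≤ k * partialSups (fun j => |scaledPartialSum x σ j|) m := by
    rw [habs]
    exact mul_le_mul (by linarith [(Nat.cast_nonneg n : (0 : ℝ) ≤ n)])
      (le_partialSups_of_le (fun j => |scaledPartialSum x σ j|) hnm) (abs_nonneg _)
      (Nat.cast_nonneg k)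
  rw [← mul_pow, ← sq_abs]
  exact pow_le_pow_left₀ (abs_nonneg _) hle 2

theorem sum_partialSups_sq_partialSum_le_of_lt {x : Fin k → ℝ} (hx : ∑ i, x i = 0) {m : ℕ}
    (hm : m < k) :
    ∑ σ, partialSups (fun n => partialSum x σ n ^ 2) m
      ≤ 4 * (k / (k - m)) ^ 2 * (k ! * ∑ i, x i ^ 2) := by
  have hkm : (0 : ℝ) < k - m := by
    rw [sub_pos]
    exact_mod_cast hm
  have hsecond : (k - m) ^ 2 * ∑ σ, scaledPartialSum x σ m ^ 2 ≤ k ! * ∑ i, x i ^ 2 := by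
    have h := card_mul_sum_sq_partialSum_le hx hm.le
    have hT : 0 ≤ (k ! : ℝ) * ∑ i, x i ^ 2 := by positivity
    have hmk : (m : ℝ) ≤ k := by exact_mod_cast hm.le
    simp only [scaledPartialSum, div_pow, ← sum_div, mul_div_cancel₀ _ (pow_pos hkm 2).ne']
    nlinarith
  calc ∑ σ, partialSups (fun n => partialSum x σ n ^ 2) m
      ≤ ∑ σ, k ^ 2 * partialSups (fun j => |scaledPartialSum x σ j|) m ^ 2 :=
        sum_le_sum fun σ _ => partialSups_le _ _ _ fun n hn =>
          sq_partialSum_le_mul_partialSups x σ hn (by omega)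
    _ ≤ k ^ 2 * (4 * ∑ σ, scaledPartialSum x σ m ^ 2) := by
        rw [← mul_sum]
        gcongr
        exact sum_sq_partialSups_abs_scaledPartialSum_le hx hm
    _ = 4 * (k / (k - m)) ^ 2 * ((k - m) ^ 2 * ∑ σ, scaledPartialSum x σ m ^ 2) := by
        field_simp
    _ ≤ 4 * (k / (k - m)) ^ 2 * (k ! * ∑ i, x i ^ 2) := by gcongr

theorem sq_partialSum_le_partialSups_add {x : Fin k → ℝ} (hx : ∑ i, x i = 0)
    (σ : Equiv.Perm (Fin k)) (m : ℕ) {n : ℕ} (hn : n ≤ k) :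
    partialSum x σ n ^ 2 ≤ partialSups (fun j => partialSum x σ j ^ 2) m
      + partialSups (fun j => partialSum x (σ * Fin.revPerm) j ^ 2) (k - m) := by
  have hnonneg : ∀ (τ : Equiv.Perm (Fin k)) (i : ℕ),
      0 ≤ partialSups (fun j => partialSum x τ j ^ 2) i :=
    fun τ i => (sq_nonneg (partialSum x τ 0)).trans
      (le_partialSups_of_le (fun j => partialSum x τ j ^ 2) (Nat.zero_le i))
  rcases le_total n m with hnm | hmn
  · linarith [le_partialSups_of_le (fun j => partialSum x σ j ^ 2) hnm,
      hnonneg (σ * Fin.revPerm) (k - m)]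
  · have hrev := partialSum_mul_revPerm x σ (Nat.sub_le k n)
    rw [hx, Nat.sub_sub_self hn, zero_sub] at hrev
    have := le_partialSups_of_le (fun j => partialSum x (σ * Fin.revPerm) j ^ 2)
      (Nat.sub_le_sub_left hmn k)
    simp only [hrev, neg_sq] at this
    linarith [hnonneg σ m]

theorem partialSum_eq_zero_of_le_one {x : Fin k → ℝ} (hx : ∑ i, x i = 0)
    (σ : Equiv.Perm (Fin k)) (hk : k ≤ 1) {n : ℕ} (hn : n ≤ k) : partialSum x σ n = 0 := by
  rcases Nat.eq_zero_or_pos n with rfl | hn0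
  · exact partialSum_zero x σ
  · rw [partialSum_of_le x σ (by omega), hx]

theorem sum_partialSups_sq_partialSum_le_add {x : Fin k → ℝ} (hx : ∑ i, x i = 0) (m : ℕ) :
    ∑ σ, partialSups (fun n => partialSum x σ n ^ 2) k
      ≤ ∑ σ, partialSups (fun n => partialSum x σ n ^ 2) m
        + ∑ σ, partialSups (fun n => partialSum x σ n ^ 2) (k - m) := by
  rw [← Equiv.sum_comp (Equiv.mulRight Fin.revPerm)
    (fun σ => partialSups (fun n => partialSum x σ n ^ 2) (k - m)), ← sum_add_distrib]
  exact sum_le_sum fun σ _ => partialSups_le _ _ _ fun n hn =>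
    sq_partialSum_le_partialSups_add hx σ m hn

theorem sum_partialSups_sq_partialSum_le {x : Fin k → ℝ} (hx : ∑ i, x i = 0) :
    ∑ σ, partialSups (fun n => partialSum x σ n ^ 2) k ≤ 52 * (k ! * ∑ i, x i ^ 2) := by
  have hT : 0 ≤ (k ! : ℝ) * ∑ i, x i ^ 2 := by positivity
  rcases le_or_gt k 1 with hk | hk
  · have : ∀ σ, partialSups (fun n => partialSum x σ n ^ 2) k ≤ 0 := fun σ =>
      partialSups_le _ _ _ fun n hn => by simp [partialSum_eq_zero_of_le_one hx σ hk hn]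
    linarith [sum_nonpos fun σ (_ : σ ∈ univ) => this σ]
  set m := k / 2
  have hm : m < k := by omega
  have hkm : k - m < k := by omega
  have hratio1 : (k : ℝ) / (k - m) ≤ 2 := by
    rw [← Nat.cast_sub hm.le, div_le_iff₀ (by exact_mod_cast (by omega : 0 < k - m))]
    exact_mod_cast (by omega : k ≤ 2 * (k - m))
  have hratio2 : (k : ℝ) / (k - (k - m : ℕ)) ≤ 3 := by
    rw [Nat.cast_sub hm.le, sub_sub_cancel, div_le_iff₀ (by exact_mod_cast (by omega : 0 < m))]
    exact_mod_cast (by omega : k ≤ 3 * m)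
  have hpos1 : (0 : ℝ) < k - m := by
    rw [sub_pos]
    exact_mod_cast hm
  have hpos2 : (0 : ℝ) < k - (k - m : ℕ) := by
    rw [sub_pos]
    exact_mod_cast hkm
  calc ∑ σ, partialSups (fun n => partialSum x σ n ^ 2) k
      ≤ ∑ σ, partialSups (fun n => partialSum x σ n ^ 2) m
        + ∑ σ, partialSups (fun n => partialSum x σ n ^ 2) (k - m) :=
        sum_partialSups_sq_partialSum_le_add hx m
    _ ≤ 4 * 2 ^ 2 * (k ! * ∑ i, x i ^ 2) + 4 * 3 ^ 2 * (k ! * ∑ i, x i ^ 2) := by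
        gcongr
        · exact (sum_partialSups_sq_partialSum_le_of_lt hx hm).trans (by gcongr)
        · exact (sum_partialSups_sq_partialSum_le_of_lt hx hkm).trans (by gcongr)
    _ = 52 * (k ! * ∑ i, x i ^ 2) := by ring

theorem sum_filter_le_eq_partialSum (x : Fin k → ℝ) (σ : Equiv.Perm (Fin k)) (i : Fin k) :
    ∑ j ∈ univ.filter (fun j : Fin k => j ≤ i), x (σ j) = partialSum x σ (i + 1) := by
  refine sum_congr (filter_congr fun j _ => ?_) fun _ _ => rfl
  rw [Fin.le_def]
  omega

end Garcia

/-- Garcia's inequality for `p = 2`: there is a constant `C₂ > 0` such that for any reals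
`x₁,…,x_k` summing to zero, the average over all permutations `σ` of the squared maximal
partial sum `max_{1≤i≤k} |x_{σ(1)}+…+x_{σ(i)}|²` is at most `C₂ ∑ xᵢ²`. -/
theorem garcia_inequality_p_two :
    ∃ C₂ : ℝ, 0 < C₂ ∧ ∀ (k : ℕ) (hk : 0 < k) (x : Fin k → ℝ),
      (∑ i, x i = 0) →
      (1 / (Nat.factorial k : ℝ)) *
          ∑ σ : Equiv.Perm (Fin k),
            (Finset.univ.sup'
              (by have : Nonempty (Fin k) := Fin.pos_iff_nonempty.mp hk
                  exact Finset.univ_nonempty)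
              (fun i : Fin k =>
                |∑ j ∈ Finset.univ.filter (fun j : Fin k => j ≤ i), x (σ j)| ^ 2))
        ≤ C₂ * ∑ i, x i ^ 2 := by
  refine ⟨52, by norm_num, fun k hk x hx => ?_⟩
  calc (1 / (k ! : ℝ)) * ∑ σ : Equiv.Perm (Fin k), univ.sup' _
        (fun i : Fin k => |∑ j ∈ univ.filter (fun j : Fin k => j ≤ i), x (σ j)| ^ 2)
      ≤ 1 / (k ! : ℝ) * ∑ σ, partialSups (fun n => Garcia.partialSum x σ n ^ 2) k := by
        gcongr with σ
        refine sup'_le _ _ fun i _ => ?_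
        rw [Garcia.sum_filter_le_eq_partialSum, sq_abs]
        exact le_partialSups_of_le (fun n => Garcia.partialSum x σ n ^ 2) i.isLt
    _ ≤ 1 / (k ! : ℝ) * (52 * (k ! * ∑ i, x i ^ 2)) := by
        gcongr
        exact Garcia.sum_partialSups_sq_partialSum_le hx
    _ = 52 * ∑ i, x i ^ 2 := by field_simp
end

section
/- For a standard Brownian motion B on [0,1] and its discretization B^{[k]}(t) = B(⌊kt⌋/k), the mean squared maximal discretization error satisfies E sup_{t∈[0,1]} (B(t) − B^{[k]}(t))² = O(log k / k) as k → ∞. -/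
open MeasureTheory ProbabilityTheory Filter Set

/-- `B` is a standard one-dimensional Brownian motion on `[0,∞)` under `P`:
it starts at `0`, has independent Gaussian increments with `B(t) − B(s) ∼ N(0, t−s)`,
and a.s. continuous paths. -/
def IsStdBM {Ω : Type*} [MeasurableSpace Ω] (P : Measure Ω) (B : ℝ → Ω → ℝ) : Prop :=
  (∀ t, Measurable (B t)) ∧
  (∀ᵐ ω ∂P, B 0 ω = 0) ∧
  (∀ s t : ℝ, 0 ≤ s → s ≤ t →
    P.map (fun ω => B t ω - B s ω) = gaussianReal 0 ((t - s).toNNReal)) ∧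
  (∀ (n : ℕ) (τ : Fin (n + 1) → ℝ), Monotone τ → (∀ i, 0 ≤ τ i) →
    iIndepFun
      (fun (i : Fin n) ω => B (τ i.succ) ω - B (τ i.castSucc) ω) P) ∧
  (∀ᵐ ω ∂P, Continuous fun t => B t ω)

open Real Topology
open scoped NNReal ENNReal

/-!
Chaining along dyadic refinements of the grid. Let `M_m` be the largest increment of `B` over
the grid of mesh `1 / N` with `N = k 2^(m+1)`. Along a continuous path, refining the grid point
`⌊k t⌋ / k` dyadically towards `t` shows `|B t - B (⌊k t⌋ / k)| ≤ ∑ₘ M_m`. Each `M_m` is a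
maximum of `N` centred Gaussians of variance `1 / N`, so a union bound on their sub-Gaussian
tails and the layer-cake formula give `E M_m² ≤ 2 (log (2N) + 1) / N = O((7/8)^(2m) log k / k)`.
Minkowski's inequality in `L²` sums the series of the `‖M_m‖₂` to `O(√(log k / k))`.
-/

section Tails

variable {Ω : Type*} [MeasurableSpace Ω] {μ : Measure Ω} {X : Ω → ℝ}

lemma hasSubgaussianMGF_of_map_eq_gaussianReal (hX : AEMeasurable X μ) {v : ℝ≥0}
    (h : μ.map X = gaussianReal 0 v) : HasSubgaussianMGF X v μ := by
  refine (HasSubgaussianMGF.id_map_iff hX).1 ?_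
  rw [h]
  exact ⟨fun t ↦ integrable_exp_mul_gaussianReal t, fun t ↦ by simp [mgf_id_gaussianReal]⟩

lemma ProbabilityTheory.HasSubgaussianMGF.measure_abs_ge_le [IsFiniteMeasure μ] {c : ℝ≥0}
    (h : HasSubgaussianMGF X c μ) {ε : ℝ} (hε : 0 ≤ ε) :
    μ {ω | ε ≤ |X ω|} ≤ ENNReal.ofReal (2 * exp (-ε ^ 2 / (2 * c))) := by
  have hsub : {ω | ε ≤ |X ω|} ⊆ {ω | ε ≤ X ω} ∪ {ω | ε ≤ (-X) ω} := fun ω hω ↦ by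
    simpa only [mem_union, mem_ofPred_eq, Pi.neg_apply, ← le_abs] using hω
  rw [← ofReal_measureReal]
  gcongr
  calc μ.real {ω | ε ≤ |X ω|}
      ≤ μ.real {ω | ε ≤ X ω} + μ.real {ω | ε ≤ (-X) ω} :=
        (measureReal_mono hsub).trans (measureReal_union_le _ _)
    _ ≤ exp (-ε ^ 2 / (2 * c)) + exp (-ε ^ 2 / (2 * c)) :=
        add_le_add (h.measure_ge_le hε) (h.neg.measure_ge_le hε)
    _ = 2 * exp (-ε ^ 2 / (2 * c)) := by ring

lemma lintegral_Ioi_exp_neg_mul {c : ℝ} (hc : 0 < c) (a : ℝ) :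
    ∫⁻ t in Ioi a, ENNReal.ofReal (exp (-c * t)) = ENNReal.ofReal (exp (-c * a) / c) := by
  rw [← ofReal_integral_eq_lintegral_ofReal (integrableOn_exp_mul_Ioi (by linarith) a)
    (ae_of_all _ fun _ ↦ (exp_pos _).le), integral_exp_mul_Ioi (by linarith), neg_div_neg_eq]

lemma lintegral_sq_le_of_measure_lt_abs_le [IsProbabilityMeasure μ] (hX : AEMeasurable X μ)
    {A c : ℝ} (hA : 1 ≤ A) (hc : 0 < c)
    (htail : ∀ x > 0, μ {ω | x < |X ω|} ≤ ENNReal.ofReal (A * exp (-c * x ^ 2))) :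
    ∫⁻ ω, ENNReal.ofReal (X ω ^ 2) ∂μ ≤ ENNReal.ofReal ((log A + 1) / c) := by
  set a := log A / c
  have ha : 0 ≤ a := div_nonneg (log_nonneg hA) hc.le
  have hca : c * a = log A := mul_div_cancel₀ _ hc.ne'
  have hlevel : ∀ t > 0, {ω | t < X ω ^ 2} = {ω | √t < |X ω|} := fun t ht ↦ by
    ext ω
    rw [mem_ofPred_eq, mem_ofPred_eq, ← sqrt_sq_eq_abs, sqrt_lt_sqrt_iff ht.le]
  have hlow : ∫⁻ t in Ioc 0 a, μ {ω | t < X ω ^ 2} ≤ ENNReal.ofReal a :=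
    calc ∫⁻ t in Ioc 0 a, μ {ω | t < X ω ^ 2} ≤ ∫⁻ _ in Ioc 0 a, 1 :=
          lintegral_mono fun _ ↦ prob_le_one
      _ = ENNReal.ofReal a := by simp
  have hhigh : ∫⁻ t in Ioi a, μ {ω | t < X ω ^ 2} ≤ ENNReal.ofReal (1 / c) :=
    calc ∫⁻ t in Ioi a, μ {ω | t < X ω ^ 2}
        ≤ ∫⁻ t in Ioi a, ENNReal.ofReal A * ENNReal.ofReal (exp (-c * t)) := by
          refine setLIntegral_mono (by fun_prop) fun t ht ↦ ?_
          have ht0 : 0 < t := ha.trans_lt ht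
          rw [hlevel t ht0, ← ENNReal.ofReal_mul (by linarith)]
          simpa [sq_sqrt ht0.le] using htail (√t) (sqrt_pos.2 ht0)
      _ = ENNReal.ofReal (1 / c) := by
          rw [lintegral_const_mul _ (by fun_prop), lintegral_Ioi_exp_neg_mul hc,
            ← ENNReal.ofReal_mul (by linarith)]
          congr 1
          rw [neg_mul, hca, exp_neg, exp_log (by linarith)]
          field_simp
  calc ∫⁻ ω, ENNReal.ofReal (X ω ^ 2) ∂μ = ∫⁻ t in Ioi 0, μ {ω | t < X ω ^ 2} :=
        lintegral_eq_lintegral_meas_lt μ (ae_of_all _ fun ω ↦ sq_nonneg (X ω)) (hX.pow_const 2)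
    _ ≤ ∫⁻ t in Ioc 0 a ∪ Ioi a, μ {ω | t < X ω ^ 2} := by rw [Ioc_union_Ioi_eq_Ioi ha]
    _ ≤ ENNReal.ofReal a + ENNReal.ofReal (1 / c) :=
        (lintegral_union_le _ _ _).trans (add_le_add hlow hhigh)
    _ = ENNReal.ofReal ((log A + 1) / c) := by
        rw [← ENNReal.ofReal_add ha (by positivity), ← hca]
        field_simp

end Tails

noncomputable def maxGridIncrement (w : ℝ → ℝ) (N : ℕ) : ℝ :=
  ⨆ j : Fin N, |w ((j + 1) / N) - w (j / N)|

lemma maxGridIncrement_nonneg (w : ℝ → ℝ) (N : ℕ) : 0 ≤ maxGridIncrement w N :=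
  Real.iSup_nonneg fun _ ↦ abs_nonneg _

lemma abs_sub_le_maxGridIncrement (w : ℝ → ℝ) {N j : ℕ} (hj : j < N) :
    |w ((j + 1) / N) - w (j / N)| ≤ maxGridIncrement w N :=
  le_ciSup (f := fun j : Fin N ↦ |w ((j + 1) / N) - w (j / N)|) (Finite.bddAbove_range _)
    ⟨j, hj⟩

lemma Nat.floor_two_mul_eq_or {K : Type*} [Semifield K] [LinearOrder K] [IsStrictOrderedRing K]
    [FloorSemiring K] (x : K) : ⌊2 * x⌋₊ = 2 * ⌊x⌋₊ ∨ ⌊2 * x⌋₊ = 2 * ⌊x⌋₊ + 1 := by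
  have h := Nat.floor_div_natCast (2 * x) 2
  rw [Nat.cast_ofNat, mul_div_cancel_left₀ x two_ne_zero] at h
  omega

lemma abs_sub_floor_grid_le_maxGridIncrement (w : ℝ → ℝ) (M : ℕ) {t : ℝ} (ht : t ≤ 1) :
    |w (⌊((2 * M : ℕ) : ℝ) * t⌋₊ / (2 * M : ℕ)) - w (⌊(M : ℝ) * t⌋₊ / M)|
      ≤ maxGridIncrement w (2 * M) := by
  have hfine : ⌊((2 * M : ℕ) : ℝ) * t⌋₊ ≤ 2 * M := by
    refine (Nat.floor_le_floor (mul_le_of_le_one_right (Nat.cast_nonneg _) ht)).trans ?_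
    rw [Nat.floor_natCast]
  have hcoarse : (⌊(M : ℝ) * t⌋₊ : ℝ) / M = ((2 * ⌊(M : ℝ) * t⌋₊ : ℕ) : ℝ) / (2 * M : ℕ) := by
    push_cast
    exact (mul_div_mul_left _ _ two_ne_zero).symm
  rw [show ((2 * M : ℕ) : ℝ) * t = 2 * ((M : ℝ) * t) by push_cast; ring] at hfine ⊢
  rw [hcoarse]
  rcases Nat.floor_two_mul_eq_or ((M : ℝ) * t) with h | h <;> rw [h] at hfine ⊢
  · simpa using maxGridIncrement_nonneg w (2 * M)
  · simpa using
      abs_sub_le_maxGridIncrement w (N := 2 * M) (j := 2 * ⌊(M : ℝ) * t⌋₊) (by omega)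

lemma tendsto_floor_mul_div_dyadic {N : ℕ} (hN : 0 < N) {t : ℝ} (ht : 0 ≤ t) :
    Tendsto (fun n : ℕ ↦ (⌊((N * 2 ^ n : ℕ) : ℝ) * t⌋₊ : ℝ) / (N * 2 ^ n : ℕ)) atTop (𝓝 t) := by
  have hgrid : Tendsto (fun n : ℕ ↦ ((N * 2 ^ n : ℕ) : ℝ)) atTop atTop :=
    tendsto_natCast_atTop_atTop.comp <| tendsto_atTop_mono
      (fun n ↦ Nat.le_mul_of_pos_left _ hN) (tendsto_pow_atTop_atTop_of_one_lt one_lt_two)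
  simpa only [mul_comm _ t, Function.comp_def] using
    (tendsto_nat_floor_mul_div_atTop ht).comp hgrid

/-- Dyadic chaining: the grid points `⌊N 2ⁿ t⌋ / (N 2ⁿ)` converge to `t`, and refining the mesh
from `1 / (N 2ⁿ)` to `1 / (N 2ⁿ⁺¹)` moves them by at most one increment of the finer grid. -/
lemma edist_floor_grid_le_tsum {w : ℝ → ℝ} (hw : Continuous w) {N : ℕ} (hN : 0 < N) {t : ℝ}
    (ht : t ∈ Icc (0 : ℝ) 1) :
    edist (w (⌊(N : ℝ) * t⌋₊ / N)) (w t)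
      ≤ ∑' m, ENNReal.ofReal (maxGridIncrement w (N * 2 ^ (m + 1))) := by
  have key := edist_le_tsum_of_edist_le_of_tendsto₀
    (f := fun n : ℕ ↦ w ((⌊((N * 2 ^ n : ℕ) : ℝ) * t⌋₊ : ℝ) / (N * 2 ^ n : ℕ)))
    (fun m ↦ ENNReal.ofReal (maxGridIncrement w (N * 2 ^ (m + 1)))) (fun n ↦ ?_)
    ((hw.tendsto t).comp (tendsto_floor_mul_div_dyadic hN ht.1))
  · simpa using key
  rw [edist_dist, Real.dist_eq, abs_sub_comm, pow_succ, mul_comm _ 2, ← mul_assoc, mul_comm N 2,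
    mul_assoc]
  exact ENNReal.ofReal_le_ofReal (abs_sub_floor_grid_le_maxGridIncrement w _ ht.2)

lemma ofReal_sq_sub_floor_grid_le {w : ℝ → ℝ} (hw : Continuous w) {k : ℕ} (hk : 0 < k) {t : ℝ}
    (ht : t ∈ Icc (0 : ℝ) 1) :
    ENNReal.ofReal ((w t - w ((⌊(k : ℝ) * t⌋ : ℤ) / k)) ^ 2)
      ≤ (∑' m, ENNReal.ofReal (maxGridIncrement w (k * 2 ^ (m + 1)))) ^ (2 : ℝ) := by
  rw [← natCast_floor_eq_intCast_floor (by have := ht.1; positivity), ENNReal.rpow_two,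
    ← sq_abs, ENNReal.ofReal_pow (abs_nonneg _), ← Real.dist_eq, ← edist_dist, edist_comm]
  gcongr
  exact edist_floor_grid_le_tsum hw hk ht

lemma lintegral_rpow_tsum_le {α : Type*} [MeasurableSpace α] {μ : Measure α} {p : ℝ}
    (hp : 1 ≤ p) {f : ℕ → α → ℝ≥0∞} (hf : ∀ n, AEMeasurable (f n) μ) :
    ∫⁻ a, (∑' n, f n a) ^ p ∂μ ≤ (∑' n, (∫⁻ a, f n a ^ p ∂μ) ^ (1 / p)) ^ p := by
  have hp0 : 0 < p := zero_lt_one.trans_le hp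
  have hpartial : ∀ n, AEMeasurable (fun a ↦ ∑ i ∈ Finset.range n, f i a) μ := fun n ↦
    Finset.aemeasurable_fun_sum _ fun i _ ↦ hf i
  have hfinite : ∀ n, (∫⁻ a, (∑ i ∈ Finset.range n, f i a) ^ p ∂μ) ^ (1 / p)
      ≤ ∑ i ∈ Finset.range n, (∫⁻ a, f i a ^ p ∂μ) ^ (1 / p) := by
    intro n
    induction n with
    | zero => simp [ENNReal.zero_rpow_of_pos hp0, hp0]
    | succ n ih =>
      simp only [Finset.sum_range_succ]
      exact (ENNReal.lintegral_Lp_add_le (hpartial n) (hf n) hp).trans (by gcongr)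
  calc ∫⁻ a, (∑' n, f n a) ^ p ∂μ
      = ∫⁻ a, ⨆ n, (∑ i ∈ Finset.range n, f i a) ^ p ∂μ := by
        congr! 2 with a
        rw [ENNReal.tsum_eq_iSup_nat]
        exact (ENNReal.orderIsoRpow p hp0).map_iSup _
    _ = ⨆ n, ∫⁻ a, (∑ i ∈ Finset.range n, f i a) ^ p ∂μ :=
        lintegral_iSup' (fun n ↦ (hpartial n).pow_const p) (ae_of_all _ fun a _ _ hmn ↦
          ENNReal.rpow_le_rpow (Finset.sum_le_sum_of_subset (Finset.range_mono hmn)) hp0.le)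
    _ ≤ _ := iSup_le fun n ↦ by
        rw [← ENNReal.rpow_inv_le_iff hp0, ← one_div]
        exact (hfinite n).trans (ENNReal.sum_le_tsum _)

lemma tsum_ofReal_sqrt_mul_geometric_rpow_two {c : ℝ} (hc : 0 ≤ c) :
    (∑' m : ℕ, ENNReal.ofReal (√c * (7 / 8) ^ m)) ^ (2 : ℝ) = ENNReal.ofReal (64 * c) := by
  rw [← ENNReal.ofReal_tsum_of_nonneg (fun m ↦ by positivity)
      ((summable_geometric_of_lt_one (by norm_num) (by norm_num)).mul_left _),
    tsum_mul_left, tsum_geometric_of_lt_one (by norm_num) (by norm_num), ENNReal.rpow_two,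
    ← ENNReal.ofReal_pow (by positivity), mul_pow, sq_sqrt hc]
  ring_nf

lemma log_dyadic_div_le_geometric {k : ℕ} (hk : 2 ≤ k) (m : ℕ) :
    (log (2 * (k * 2 ^ (m + 1) : ℕ)) + 1) / ((k * 2 ^ (m + 1) : ℕ) / 2)
      ≤ 5 * log k / k * ((7 / 8) ^ m) ^ 2 := by
  have hk0 : (0 : ℝ) < k := by positivity
  have hlog2 : log 2 ≤ log k := log_le_log two_pos (by exact_mod_cast hk)
  have hhalf : 1 / 2 < log 2 := by linarith [log_two_gt_d9]
  have hlog : log (2 * (k * 2 ^ (m + 1) : ℕ)) = log k + (m + 2) * log 2 := by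
    push_cast
    rw [show (2 : ℝ) * (k * 2 ^ (m + 1)) = k * 2 ^ (m + 2) by ring,
      log_mul hk0.ne' (by positivity), log_pow]
    push_cast
    ring
  have hbernoulli : 1 + m * (17 / 32) ≤ (49 / 32 : ℝ) ^ m := by
    have := one_add_mul_le_pow (a := (17 / 32 : ℝ)) (by norm_num) m
    norm_num at this ⊢
    linarith
  have hnum : log (2 * (k * 2 ^ (m + 1) : ℕ)) + 1 ≤ 5 * log k * (49 / 32) ^ m := by
    rw [hlog]
    nlinarith
  calc (log (2 * (k * 2 ^ (m + 1) : ℕ)) + 1) / ((k * 2 ^ (m + 1) : ℕ) / 2)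
      = (log (2 * (k * 2 ^ (m + 1) : ℕ)) + 1) / (k * 2 ^ m) := by push_cast; ring
    _ ≤ 5 * log k * (49 / 32) ^ m / (k * 2 ^ m) := by gcongr
    _ = 5 * log k / k * ((7 / 8) ^ m) ^ 2 := by
        rw [← pow_mul, mul_comm m 2, pow_mul]
        field_simp
        rw [mul_assoc, ← mul_pow]
        norm_num

namespace IsStdBM

variable {Ω : Type*} [MeasurableSpace Ω] {P : Measure Ω} {B : ℝ → Ω → ℝ}

lemma hasSubgaussianMGF_sub (hB : IsStdBM P B) {s t : ℝ} (hs : 0 ≤ s) (hst : s ≤ t) :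
    HasSubgaussianMGF (fun ω ↦ B t ω - B s ω) (t - s).toNNReal P :=
  hasSubgaussianMGF_of_map_eq_gaussianReal ((hB.1 t).sub (hB.1 s)).aemeasurable
    (hB.2.2.1 s t hs hst)

lemma measurable_maxGridIncrement (hB : IsStdBM P B) (N : ℕ) :
    Measurable fun ω ↦ maxGridIncrement (B · ω) N :=
  Measurable.iSup fun _ ↦ ((hB.1 _).sub (hB.1 _)).abs

lemma measure_lt_maxGridIncrement_le [IsProbabilityMeasure P] (hB : IsStdBM P B) {N : ℕ}
    (hN : 0 < N) {x : ℝ} (hx : 0 < x) :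
    P {ω | x < |maxGridIncrement (B · ω) N|}
      ≤ ENNReal.ofReal (2 * N * exp (-(N / 2) * x ^ 2)) := by
  have : Nonempty (Fin N) := ⟨⟨0, hN⟩⟩
  have hsub : {ω | x < |maxGridIncrement (B · ω) N|}
      ⊆ ⋃ j : Fin N, {ω | x ≤ |B ((j + 1) / N) ω - B (j / N) ω|} := fun ω hω ↦ by
    rw [mem_ofPred_eq, abs_of_nonneg (maxGridIncrement_nonneg _ _)] at hω
    obtain ⟨j, hj⟩ := exists_lt_of_lt_ciSup hω
    exact mem_iUnion.2 ⟨j, hj.le⟩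
  have hincrement : ∀ j : Fin N, P {ω | x ≤ |B ((j + 1) / N) ω - B (j / N) ω|}
      ≤ ENNReal.ofReal (2 * exp (-(N / 2) * x ^ 2)) := fun j ↦ by
    have hN' : (0 : ℝ) < N := by exact_mod_cast hN
    have hstep : ((j : ℝ) + 1) / N - j / N = 1 / N := by ring
    convert (hB.hasSubgaussianMGF_sub (s := j / N) (t := (j + 1) / N) (by positivity)
      (by gcongr; linarith)).measure_abs_ge_le hx.le using 4
    rw [hstep, Real.coe_toNNReal _ (by positivity)]
    field_simp
  calc P {ω | x < |maxGridIncrement (B · ω) N|}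
      ≤ ∑ j : Fin N, P {ω | x ≤ |B ((j + 1) / N) ω - B (j / N) ω|} :=
        (measure_mono hsub).trans (measure_iUnion_fintype_le _ _)
    _ ≤ ∑ _j : Fin N, ENNReal.ofReal (2 * exp (-(N / 2) * x ^ 2)) :=
        Finset.sum_le_sum fun j _ ↦ hincrement j
    _ = ENNReal.ofReal (2 * N * exp (-(N / 2) * x ^ 2)) := by
        rw [Finset.sum_const, Finset.card_univ, Fintype.card_fin, nsmul_eq_mul,
          ← ENNReal.ofReal_natCast, ← ENNReal.ofReal_mul (by positivity)]
        ring_nf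

lemma lintegral_maxGridIncrement_sq_le [IsProbabilityMeasure P] (hB : IsStdBM P B) {N : ℕ}
    (hN : 0 < N) :
    ∫⁻ ω, ENNReal.ofReal (maxGridIncrement (B · ω) N ^ 2) ∂P
      ≤ ENNReal.ofReal ((log (2 * N) + 1) / (N / 2)) :=
  lintegral_sq_le_of_measure_lt_abs_le (hB.measurable_maxGridIncrement N).aemeasurable
    (by norm_cast; omega) (by positivity) fun _ hx ↦ hB.measure_lt_maxGridIncrement_le hN hx

lemma lintegral_maxGridIncrement_dyadic_rpow_le [IsProbabilityMeasure P] (hB : IsStdBM P B)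
    {k : ℕ} (hk : 2 ≤ k) (m : ℕ) :
    (∫⁻ ω, ENNReal.ofReal (maxGridIncrement (B · ω) (k * 2 ^ (m + 1))) ^ (2 : ℝ) ∂P) ^ (1 / 2 : ℝ)
      ≤ ENNReal.ofReal (√(5 * log k / k) * (7 / 8) ^ m) := by
  have hmoment := (hB.lintegral_maxGridIncrement_sq_le (N := k * 2 ^ (m + 1))
    (by positivity)).trans (ENNReal.ofReal_le_ofReal (log_dyadic_div_le_geometric hk m))
  simp_rw [ENNReal.rpow_two, ← ENNReal.ofReal_pow (maxGridIncrement_nonneg _ _)]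
  calc _ ≤ ENNReal.ofReal (5 * log k / k * ((7 / 8) ^ m) ^ 2) ^ (1 / 2 : ℝ) := by gcongr
    _ = ENNReal.ofReal (√(5 * log k / k) * (7 / 8) ^ m) := by
        have : 0 ≤ log k := log_nonneg (by exact_mod_cast (one_le_two.trans hk))
        rw [ENNReal.ofReal_rpow_of_nonneg (by positivity) (by norm_num), ← sqrt_eq_rpow,
          sqrt_mul (by positivity), sqrt_sq (by positivity)]

end IsStdBM

/-- For a standard Brownian motion `B` and its discretization `B^{[k]}(t) = B(⌊kt⌋/k)`,
`E sup_{t∈[0,1]} (B(t) − B^{[k]}(t))² = O(log k / k)` as `k → ∞`. -/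
theorem bm_discretization_error
    {Ω : Type*} [MeasurableSpace Ω] (P : Measure Ω) [IsProbabilityMeasure P]
    (B : ℝ → Ω → ℝ) (hB : IsStdBM P B) :
    ∃ C : ℝ, 0 < C ∧ ∃ k₀ : ℕ, ∀ k : ℕ, k₀ ≤ k →
      ∫⁻ ω, ⨆ t : Set.Icc (0 : ℝ) 1,
          ENNReal.ofReal ((B t ω - B ((⌊(k : ℝ) * t⌋ : ℤ) / k) ω) ^ 2) ∂P
        ≤ ENNReal.ofReal (C * Real.log k / k) := by
  refine ⟨320, by norm_num, 2, fun k hk ↦ ?_⟩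
  have hlog : 0 ≤ 5 * log k / k := by
    have := log_nonneg (by exact_mod_cast (one_le_two.trans hk) : (1 : ℝ) ≤ k)
    positivity
  calc ∫⁻ ω, ⨆ t : Icc (0 : ℝ) 1,
        ENNReal.ofReal ((B t ω - B ((⌊(k : ℝ) * t⌋ : ℤ) / k) ω) ^ 2) ∂P
      ≤ ∫⁻ ω, (∑' m, ENNReal.ofReal (maxGridIncrement (B · ω) (k * 2 ^ (m + 1)))) ^ (2 : ℝ) ∂P :=
        lintegral_mono_ae <| hB.2.2.2.2.mono fun ω hω ↦ iSup_le fun t ↦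
          ofReal_sq_sub_floor_grid_le hω (by omega) t.2
    _ ≤ (∑' m, (∫⁻ ω, ENNReal.ofReal (maxGridIncrement (B · ω) (k * 2 ^ (m + 1))) ^ (2 : ℝ) ∂P)
          ^ (1 / 2 : ℝ)) ^ (2 : ℝ) :=
        lintegral_rpow_tsum_le one_le_two fun m ↦
          (hB.measurable_maxGridIncrement _).ennreal_ofReal.aemeasurable
    _ ≤ (∑' m, ENNReal.ofReal (√(5 * log k / k) * (7 / 8) ^ m)) ^ (2 : ℝ) := by
        gcongr with m
        exact hB.lintegral_maxGridIncrement_dyadic_rpow_le hk m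
    _ = ENNReal.ofReal (320 * log k / k) := by
        rw [tsum_ofReal_sqrt_mul_geometric_rpow_two hlog]
        ring_nf
end

section
/- Let Xₙ be a sequence of Lévy processes with Lévy measures Πₙ such that Xₙ(1) converges in distribution to a standard normal random variable. Then μ₄,ₙ := ∫ x⁴ Πₙ(dx) → 0 if and only if lim_{M→∞} limsup_{n→∞} ∫_{|x|>M} x⁴ Πₙ(dx) = 0. -/
/-!
Write `ψₙ(u) = σₙ² u² / 2 + ∫ (1 - cos ux) Πₙ(dx)`, so that `|E exp(iuXₙ(1))| = exp(-ψₙ(u))`;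
convergence to the standard normal law gives `ψₙ(u) → u² / 2` for every `u`. The identity
`(1 - cos t)² = 2 (1 - cos t) - (1 - cos 2t) / 2` cancels the Gaussian parts, so
`∫ (1 - cos ux)² Πₙ(dx) = 2 ψₙ(u) - ψₙ(2u) / 2 → 0`. As `√2` is irrational,
`(1 - cos x)² + (1 - cos √2x)²` is bounded below on every annulus `h ≤ |x| ≤ M`, hence the fourth
moment of `Πₙ` on such an annulus tends to `0`. Near the origin `x⁴ ≤ π² h⁴ (1 - cos (x/h)) / 2`,
whose integral is `O(h²)` uniformly in large `n` by the bound on `ψₙ(1/h)`. Splitting `∫ x⁴ Πₙ(dx)`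
over `|x| ≤ h`, `h < |x| ≤ M` and `|x| > M` gives the nontrivial implication.
-/

open MeasureTheory ProbabilityTheory Filter Set

/-- A one-dimensional Lévy process under `P`, bundled with its Lévy–Khintchine triplet
`(b, σ2, ν)`: it starts at `0`, has stationary independent increments, a.s. right-continuous
paths, and its marginal characteristic functions are given by the Lévy–Khintchine formula. -/
structure LevyProcess {Ω : Type*} [MeasurableSpace Ω] (P : Measure Ω) where
  X : ℝ → Ω → ℝ
  /-- drift -/
  b : ℝ
  /-- Gaussian variance -/
  σ2 : ℝ
  /-- Lévy measure -/
  ν : Measure ℝ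
  meas : ∀ t, Measurable (X t)
  zero : ∀ᵐ ω ∂P, X 0 ω = 0
  rc : ∀ᵐ ω ∂P, ∀ t : ℝ, ContinuousWithinAt (fun s => X s ω) (Set.Ici t) t
  sigma2_nonneg : 0 ≤ σ2
  nu_atom : ν {0} = 0
  nu_int : ∫⁻ x, ENNReal.ofReal (min (x ^ 2) 1) ∂ν ≠ ⊤
  indep : ∀ (n : ℕ) (τ : Fin (n + 1) → ℝ), Monotone τ → (∀ i, 0 ≤ τ i) →
    iIndepFun
      (fun (i : Fin n) ω => X (τ i.succ) ω - X (τ i.castSucc) ω) P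
  stat : ∀ s t : ℝ, 0 ≤ s → s ≤ t →
    P.map (fun ω => X t ω - X s ω) = P.map (X (t - s))
  levyKhintchine : ∀ t : ℝ, 0 ≤ t → ∀ u : ℝ,
    ∫ ω, Complex.exp (Complex.I * Complex.ofReal (u * X t ω)) ∂P
      = Complex.exp ((t : ℂ) *
          (Complex.I * Complex.ofReal (u * b) - Complex.ofReal (σ2 * u ^ 2 / 2)
            + ∫ x : ℝ,
                (Complex.exp (Complex.I * Complex.ofReal (u * x)) - 1
                  - Complex.I * Complex.ofReal (u * Set.indicator (Set.Icc (-1 : ℝ) 1) id x)) ∂ν))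

open Complex Topology BoundedContinuousFunction

lemma norm_cexp_I_mul_sub_one_sub_le (t : ℝ) : ‖cexp (I * t) - 1 - I * t‖ ≤ 2 * t ^ 2 := by
  have hIt : ‖I * (t : ℂ)‖ = |t| := by simp
  rcases le_or_gt |t| 1 with ht | ht
  · have := norm_exp_sub_one_sub_id_le (x := I * t) (hIt ▸ ht)
    rw [hIt, sq_abs] at this
    nlinarith [sq_nonneg t]
  · calc ‖cexp (I * t) - 1 - I * t‖ ≤ ‖cexp (I * t) - 1‖ + ‖I * (t : ℂ)‖ := norm_sub_le _ _
      _ ≤ |t| + |t| := by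
          rw [hIt]; gcongr; simpa using Real.norm_exp_I_mul_ofReal_sub_one_le (x := t)
      _ ≤ 2 * t ^ 2 := by nlinarith [sq_abs t]

lemma one_sub_cos_sq_eq (t : ℝ) :
    (1 - Real.cos t) ^ 2 = 2 * (1 - Real.cos t) - (1 - Real.cos (2 * t)) / 2 := by
  rw [Real.cos_two_mul]; ring

lemma sq_le_mul_one_sub_cos {t : ℝ} (ht : |t| ≤ Real.pi) :
    t ^ 2 ≤ Real.pi ^ 2 / 2 * (1 - Real.cos t) := by
  have := Real.cos_le_one_sub_mul_cos_sq ht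
  have hπ := Real.pi_pos
  rw [div_mul_eq_mul_div, le_div_iff₀ two_pos]
  field_simp at this ⊢
  nlinarith

lemma pow_four_le_mul_one_sub_cos {h x : ℝ} (hh : 0 < h) (hx : |x| ≤ h) :
    x ^ 4 ≤ Real.pi ^ 2 / 2 * h ^ 4 * (1 - Real.cos (h⁻¹ * x)) := by
  have hy : |h⁻¹ * x| ≤ 1 := by
    rw [abs_mul, abs_inv, abs_of_pos hh, inv_mul_le_one₀ hh]; exact hx
  have hy2 : (h⁻¹ * x) ^ 2 ≤ 1 := by rwa [sq_le_one_iff_abs_le_one]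
  have hcos := sq_le_mul_one_sub_cos (hy.trans (by linarith [Real.pi_gt_three]))
  have hx4 : x ^ 4 = h ^ 4 * (h⁻¹ * x) ^ 2 * (h⁻¹ * x) ^ 2 := by field_simp
  rw [hx4, mul_comm (Real.pi ^ 2 / 2), mul_assoc, mul_assoc]
  exact mul_le_mul_of_nonneg_left ((mul_le_of_le_one_right (sq_nonneg _) hy2).trans hcos)
    (by positivity)

lemma one_sub_cos_sq_add_one_sub_cos_sqrt_two_mul_sq_pos {x : ℝ} (hx : x ≠ 0) :
    0 < (1 - Real.cos x) ^ 2 + (1 - Real.cos (√2 * x)) ^ 2 := by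
  by_contra! hle
  obtain ⟨hcos, hcos'⟩ : Real.cos x = 1 ∧ Real.cos (√2 * x) = 1 := by
    constructor <;> nlinarith [sq_nonneg (1 - Real.cos x), sq_nonneg (1 - Real.cos (√2 * x))]
  obtain ⟨n, hn⟩ := (Real.cos_eq_one_iff x).1 hcos
  obtain ⟨m, hm⟩ := (Real.cos_eq_one_iff _).1 hcos'
  have hn0 : (n : ℝ) ≠ 0 := by rintro h0; rw [h0, zero_mul] at hn; exact hx hn.symm
  refine irrational_sqrt_two ⟨m / n, ?_⟩
  rw [← hn, mul_comm √2, mul_right_comm] at hm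
  push_cast
  rw [div_eq_iff hn0, mul_comm √2]
  exact mul_right_cancel₀ (by positivity : 2 * Real.pi ≠ 0) hm

lemma exists_pos_le_one_sub_cos_sq_add_one_sub_cos_sqrt_two_mul_sq {h : ℝ} (hh : 0 < h) (M : ℝ) :
    ∃ c > 0, ∀ x, h ≤ |x| → |x| ≤ M →
      c ≤ (1 - Real.cos x) ^ 2 + (1 - Real.cos (√2 * x)) ^ 2 := by
  have hcompact : IsCompact {x : ℝ | h ≤ |x| ∧ |x| ≤ M} :=
    (isCompact_Icc (a := -M) (b := M)).of_isClosed_subset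
      ((isClosed_le continuous_const continuous_abs).inter
        (isClosed_le continuous_abs continuous_const))
      fun x hx => abs_le.1 hx.2
  obtain ⟨c, hc, hcle⟩ := hcompact.exists_forall_le' (a := 0) (by fun_prop)
    fun x hx => one_sub_cos_sq_add_one_sub_cos_sqrt_two_mul_sq_pos
      (abs_pos.1 (hh.trans_le hx.1))
  exact ⟨c, hc, fun x hx hxM => hcle x ⟨hx, hxM⟩⟩

lemma setLIntegral_ofReal_le_ofReal_integral {α : Type*} [MeasurableSpace α] {μ : Measure α}
    {s : Set α} {f g : α → ℝ} (hs : MeasurableSet s) (hf : Integrable f μ) (hf0 : 0 ≤ᵐ[μ] f)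
    (hgf : ∀ x ∈ s, g x ≤ f x) :
    ∫⁻ x in s, ENNReal.ofReal (g x) ∂μ ≤ ENNReal.ofReal (∫ x, f x ∂μ) :=
  calc ∫⁻ x in s, ENNReal.ofReal (g x) ∂μ ≤ ∫⁻ x in s, ENNReal.ofReal (f x) ∂μ :=
        setLIntegral_mono' hs fun x hx => ENNReal.ofReal_le_ofReal (hgf x hx)
    _ ≤ ∫⁻ x, ENNReal.ofReal (f x) ∂μ := setLIntegral_le_lintegral _ _
    _ = ENNReal.ofReal (∫ x, f x ∂μ) := (ofReal_integral_eq_lintegral_ofReal hf hf0).symm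

lemma lintegral_le_add_annulus_add_tail {μ : Measure ℝ} (f : ℝ → ENNReal) (h M : ℝ) :
    ∫⁻ x, f x ∂μ ≤ ∫⁻ x in {x | |x| ≤ h}, f x ∂μ + ∫⁻ x in {x | h < |x| ∧ |x| ≤ M}, f x ∂μ
      + ∫⁻ x in {x | M < |x|}, f x ∂μ := by
  have hcover : univ ⊆ ({x : ℝ | |x| ≤ h} ∪ {x | h < |x| ∧ |x| ≤ M}) ∪ {x | M < |x|} := by
    intro x _
    rcases le_or_gt |x| h with hxh | hxh
    · exact .inl (.inl hxh)
    rcases le_or_gt |x| M with hxM | hxM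
    · exact .inl (.inr ⟨hxh, hxM⟩)
    · exact .inr hxM
  calc ∫⁻ x, f x ∂μ = ∫⁻ x in univ, f x ∂μ := by rw [Measure.restrict_univ]
    _ ≤ _ := lintegral_mono_set hcover
    _ ≤ _ := (lintegral_union_le _ _ _).trans (add_le_add (lintegral_union_le _ _ _) le_rfl)

lemma tendsto_charFun_of_forall_tendsto_integral {E ι : Type*} [SeminormedAddCommGroup E]
    [InnerProductSpace ℝ E] [MeasurableSpace E] [OpensMeasurableSpace E] {l : Filter ι}
    {μ : ι → Measure E} [∀ i, IsProbabilityMeasure (μ i)] {μ₀ : Measure E}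
    [IsProbabilityMeasure μ₀]
    (h : ∀ f : E →ᵇ ℝ, Tendsto (fun i => ∫ x, f x ∂μ i) l (𝓝 (∫ x, f x ∂μ₀))) (t : E) :
    Tendsto (fun i => charFun (μ i) t) l (𝓝 (charFun μ₀ t)) := by
  have hweak : Tendsto (β := ProbabilityMeasure E) (fun i => ⟨μ i, inferInstance⟩) l
      (𝓝 ⟨μ₀, inferInstance⟩) :=
    ProbabilityMeasure.tendsto_iff_forall_integral_tendsto.2 h
  simp_rw [charFun_eq_integral_innerProbChar]
  exact (ProbabilityMeasure.tendsto_iff_forall_integral_rclike_tendsto ℂ).1 hweak _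

noncomputable def levyKhintchineIntegrand (u x : ℝ) : ℂ :=
  cexp (I * ↑(u * x)) - 1 - I * ↑(u * (Icc (-1 : ℝ) 1).indicator id x)

lemma measurable_levyKhintchineIntegrand (u : ℝ) : Measurable (levyKhintchineIntegrand u) := by
  unfold levyKhintchineIntegrand; fun_prop (disch := measurability)

lemma norm_levyKhintchineIntegrand_le (u x : ℝ) :
    ‖levyKhintchineIntegrand u x‖ ≤ 2 * (u ^ 2 + 1) * min (x ^ 2) 1 := by
  unfold levyKhintchineIntegrand
  by_cases hx : x ∈ Icc (-1 : ℝ) 1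
  · have hx2 : x ^ 2 ≤ 1 := by rw [sq_le_one_iff_abs_le_one, abs_le]; exact hx
    rw [indicator_of_mem hx, id, min_eq_left hx2]
    calc _ ≤ 2 * (u * x) ^ 2 := norm_cexp_I_mul_sub_one_sub_le (u * x)
      _ ≤ _ := by nlinarith [sq_nonneg x, sq_nonneg u]
  · have hx2 : 1 ≤ x ^ 2 := by
      rw [one_le_sq_iff_one_le_abs]; by_contra! h; exact hx (abs_le.1 h.le)
    rw [indicator_of_notMem hx, min_eq_right hx2]
    calc _ = ‖cexp (I * ↑(u * x)) - 1‖ := by simp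
      _ ≤ ‖cexp (I * ↑(u * x))‖ + ‖(1 : ℂ)‖ := norm_sub_le _ _
      _ = 2 := by rw [norm_exp_I_mul_ofReal]; norm_num
      _ ≤ _ := by nlinarith [sq_nonneg u]

lemma re_levyKhintchineIntegrand (u x : ℝ) :
    (levyKhintchineIntegrand u x).re = -(1 - Real.cos (u * x)) := by
  simp [levyKhintchineIntegrand, Complex.exp_re]

section LevyMeasure

variable {ν : Measure ℝ}

lemma integrable_min_sq_one (hν : ∫⁻ x, ENNReal.ofReal (min (x ^ 2) 1) ∂ν ≠ ⊤) :
    Integrable (fun x => min (x ^ 2) 1) ν := by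
  refine ⟨by fun_prop, ?_⟩
  rw [hasFiniteIntegral_iff_ofReal (ae_of_all _ fun x => by positivity)]
  exact hν.lt_top

lemma integrable_levyKhintchineIntegrand (hν : ∫⁻ x, ENNReal.ofReal (min (x ^ 2) 1) ∂ν ≠ ⊤)
    (u : ℝ) :
    Integrable (levyKhintchineIntegrand u) ν :=
  ((integrable_min_sq_one hν).const_mul _).mono'
    (measurable_levyKhintchineIntegrand u).aestronglyMeasurable
    (ae_of_all _ (norm_levyKhintchineIntegrand_le u))

lemma integrable_one_sub_cos (hν : ∫⁻ x, ENNReal.ofReal (min (x ^ 2) 1) ∂ν ≠ ⊤) (u : ℝ) :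
    Integrable (fun x => 1 - Real.cos (u * x)) ν := by
  have := (integrable_levyKhintchineIntegrand hν u).re.neg
  simpa only [RCLike.re_eq_complex_re, re_levyKhintchineIntegrand, Pi.neg_def, neg_neg] using this

lemma integrable_one_sub_cos_sq (hν : ∫⁻ x, ENNReal.ofReal (min (x ^ 2) 1) ∂ν ≠ ⊤) (u : ℝ) :
    Integrable (fun x => (1 - Real.cos (u * x)) ^ 2) ν := by
  refine ((integrable_one_sub_cos hν u).const_mul 2).mono' (by fun_prop)
    (ae_of_all _ fun x => ?_)
  have := Real.cos_le_one (u * x)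
  have := Real.neg_one_le_cos (u * x)
  rw [Real.norm_eq_abs, abs_of_nonneg (sq_nonneg _)]
  nlinarith

lemma re_integral_levyKhintchineIntegrand (hν : ∫⁻ x, ENNReal.ofReal (min (x ^ 2) 1) ∂ν ≠ ⊤)
    (u : ℝ) :
    (∫ x, levyKhintchineIntegrand u x ∂ν).re = -∫ x, 1 - Real.cos (u * x) ∂ν := by
  rw [← integral_neg, ← RCLike.re_eq_complex_re,
    ← integral_re (integrable_levyKhintchineIntegrand hν u)]
  simp only [RCLike.re_eq_complex_re, re_levyKhintchineIntegrand]

end LevyMeasure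

namespace LevyProcess

variable {Ω : Type*} [MeasurableSpace Ω] {P : Measure Ω}

/-- Minus the real part of the Lévy–Khintchine exponent of `L`. -/
noncomputable def realExponent (L : LevyProcess P) (u : ℝ) : ℝ :=
  L.σ2 * u ^ 2 / 2 + ∫ x, 1 - Real.cos (u * x) ∂L.ν

lemma norm_charFun_map_X_one (L : LevyProcess P) (u : ℝ) :
    ‖charFun (P.map (L.X 1)) u‖ = Real.exp (-L.realExponent u) := by
  have hLK := L.levyKhintchine 1 zero_le_one u
  change _ = cexp (_ * (_ - _ + ∫ x, levyKhintchineIntegrand u x ∂L.ν)) at hLK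
  rw [charFun_apply_real, integral_map (L.meas 1).aemeasurable (by fun_prop)]
  simp_rw [show ∀ x : ℝ, (u : ℂ) * x * I = I * ↑(u * x) by intro x; push_cast; ring]
  rw [hLK, norm_exp, realExponent, ofReal_one, one_mul, add_re, sub_re, ofReal_re,
    re_integral_levyKhintchineIntegrand L.nu_int, mul_comm I, re_ofReal_mul, I_re, mul_zero]
  congr 1
  ring

lemma integral_one_sub_cos_sq_eq (L : LevyProcess P) (u : ℝ) :
    ∫ x, (1 - Real.cos (u * x)) ^ 2 ∂L.ν = 2 * L.realExponent u - L.realExponent (2 * u) / 2 := by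
  simp_rw [realExponent, one_sub_cos_sq_eq, ← mul_assoc]
  rw [integral_sub ((integrable_one_sub_cos L.nu_int u).const_mul 2)
    ((integrable_one_sub_cos L.nu_int (2 * u)).div_const 2), integral_const_mul, integral_div]
  ring

section Sequence

variable {L : ℕ → LevyProcess P}

lemma tendsto_realExponent [IsProbabilityMeasure P]
    (hconv : ∀ f : ℝ →ᵇ ℝ, Tendsto (fun n => ∫ x, f x ∂(P.map ((L n).X 1))) atTop
      (𝓝 (∫ x, f x ∂(gaussianReal 0 1)))) (u : ℝ) :
    Tendsto (fun n => (L n).realExponent u) atTop (𝓝 (u ^ 2 / 2)) := by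
  have := fun n => Measure.isProbabilityMeasure_map (μ := P) ((L n).meas 1).aemeasurable
  have hnorm := (tendsto_charFun_of_forall_tendsto_integral hconv u).norm
  simp_rw [norm_charFun_map_X_one, charFun_gaussianReal, norm_exp] at hnorm
  have hlog := ((Real.continuousAt_log (Real.exp_pos _).ne').tendsto.comp hnorm).neg
  simpa [Function.comp_def, ← ofReal_pow] using hlog

lemma tendsto_integral_one_sub_cos_sq
    (hψ : ∀ u, Tendsto (fun n => (L n).realExponent u) atTop (𝓝 (u ^ 2 / 2))) (u : ℝ) :
    Tendsto (fun n => ∫ x, (1 - Real.cos (u * x)) ^ 2 ∂(L n).ν) atTop (𝓝 0) := by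
  simp_rw [integral_one_sub_cos_sq_eq]
  convert ((hψ u).const_mul 2).sub ((hψ (2 * u)).div_const 2) using 2
  ring

lemma eventually_setLIntegral_pow_four_le
    (hψ : ∀ u, Tendsto (fun n => (L n).realExponent u) atTop (𝓝 (u ^ 2 / 2)))
    {h : ℝ} (hh : 0 < h) :
    ∀ᶠ n in atTop, ∫⁻ x in {x | |x| ≤ h}, ENNReal.ofReal (x ^ 4) ∂(L n).ν
      ≤ ENNReal.ofReal (Real.pi ^ 2 * h ^ 2 / 2) := by
  set C := Real.pi ^ 2 / 2 * h ^ 4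
  have hC : C * h⁻¹ ^ 2 = Real.pi ^ 2 * h ^ 2 / 2 := by
    simp only [C]; field_simp
  filter_upwards [(hψ h⁻¹).eventually_le_const (half_lt_self (by positivity))] with n hn
  rw [← hC]
  refine (setLIntegral_ofReal_le_ofReal_integral
    (measurableSet_le (f := fun x : ℝ => |x|) (by fun_prop) measurable_const)
    ((integrable_one_sub_cos (L n).nu_int h⁻¹).const_mul C)
    (ae_of_all _ fun x => mul_nonneg (by positivity) (sub_nonneg.2 (Real.cos_le_one _)))
    fun x hx => pow_four_le_mul_one_sub_cos hh hx).trans (ENNReal.ofReal_le_ofReal ?_)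
  rw [integral_const_mul]
  refine mul_le_mul_of_nonneg_left (le_trans ?_ hn) (by positivity)
  have := (L n).sigma2_nonneg
  exact le_add_of_nonneg_left (by positivity)

lemma tendsto_setLIntegral_pow_four_annulus
    (hψ : ∀ u, Tendsto (fun n => (L n).realExponent u) atTop (𝓝 (u ^ 2 / 2)))
    {h : ℝ} (hh : 0 < h) (M : ℝ) :
    Tendsto (fun n => ∫⁻ x in {x | h < |x| ∧ |x| ≤ M}, ENNReal.ofReal (x ^ 4) ∂(L n).ν) atTop
      (𝓝 0) := by
  obtain ⟨c, hc, hcle⟩ := exists_pos_le_one_sub_cos_sq_add_one_sub_cos_sqrt_two_mul_sq hh M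
  set K : ℝ → ℝ := fun x => (1 - Real.cos x) ^ 2 + (1 - Real.cos (√2 * x)) ^ 2
  have hint : ∀ n, Integrable (fun x => (1 - Real.cos x) ^ 2) (L n).ν := fun n => by
    simpa only [one_mul] using integrable_one_sub_cos_sq (L n).nu_int 1
  have hint' : ∀ n, Integrable (fun x => (1 - Real.cos (√2 * x)) ^ 2) (L n).ν := fun n =>
    integrable_one_sub_cos_sq (L n).nu_int √2
  have hK : Tendsto (fun n => ∫ x, K x ∂(L n).ν) atTop (𝓝 0) := by
    have := (tendsto_integral_one_sub_cos_sq hψ 1).add (tendsto_integral_one_sub_cos_sq hψ √2)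
    simp only [one_mul, add_zero] at this
    exact this.congr fun n => (integral_add (hint n) (hint' n)).symm
  have hbound : ∀ n, ∫⁻ x in {x | h < |x| ∧ |x| ≤ M}, ENNReal.ofReal (x ^ 4) ∂(L n).ν
      ≤ ENNReal.ofReal (M ^ 4 / c * ∫ x, K x ∂(L n).ν) := fun n => by
    rw [← integral_const_mul]
    refine setLIntegral_ofReal_le_ofReal_integral
      ((measurableSet_lt (g := fun x : ℝ => |x|) measurable_const (by fun_prop)).inter
        (measurableSet_le (f := fun x : ℝ => |x|) (by fun_prop) measurable_const))
      (((hint n).add (hint' n)).const_mul _) (ae_of_all _ fun x => by positivity) fun x hx => ?_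
    have hx4 : x ^ 4 ≤ M ^ 4 := by
      rw [← Even.pow_abs ⟨2, rfl⟩]; exact pow_le_pow_left₀ (abs_nonneg x) hx.2 4
    calc x ^ 4 ≤ M ^ 4 / c * c := by rwa [div_mul_cancel₀ _ hc.ne']
      _ ≤ M ^ 4 / c * K x := mul_le_mul_of_nonneg_left (hcle x hx.1.le hx.2) (by positivity)
  refine tendsto_of_tendsto_of_tendsto_of_le_of_le tendsto_const_nhds ?_ (fun _ => zero_le)
    hbound
  have := (ENNReal.continuous_ofReal.tendsto _).comp (hK.const_mul (M ^ 4 / c))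
  rwa [mul_zero, ENNReal.ofReal_zero] at this

lemma limsup_lintegral_pow_four_le
    (hψ : ∀ u, Tendsto (fun n => (L n).realExponent u) atTop (𝓝 (u ^ 2 / 2)))
    {h : ℝ} (hh : 0 < h) (M : ℝ) :
    limsup (fun n => ∫⁻ x, ENNReal.ofReal (x ^ 4) ∂(L n).ν) atTop
      ≤ ENNReal.ofReal (Real.pi ^ 2 * h ^ 2 / 2)
        + limsup (fun n => ∫⁻ x in {x | M < |x|}, ENNReal.ofReal (x ^ 4) ∂(L n).ν) atTop := by
  set tail := fun n => ∫⁻ x in {x | M < |x|}, ENNReal.ofReal (x ^ 4) ∂(L n).ν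
  set annulus := fun n => ∫⁻ x in {x | h < |x| ∧ |x| ≤ M}, ENNReal.ofReal (x ^ 4) ∂(L n).ν
  calc limsup (fun n => ∫⁻ x, ENNReal.ofReal (x ^ 4) ∂(L n).ν) atTop
      ≤ limsup ((fun n => ENNReal.ofReal (Real.pi ^ 2 * h ^ 2 / 2) + tail n) + annulus) atTop := by
        refine limsup_le_limsup ?_
        filter_upwards [eventually_setLIntegral_pow_four_le hψ hh] with n hn
        refine (lintegral_le_add_annulus_add_tail _ h M).trans ?_
        rw [Pi.add_apply, add_right_comm]
        gcongr
    _ = ENNReal.ofReal (Real.pi ^ 2 * h ^ 2 / 2) + limsup tail atTop := by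
        rw [ENNReal.limsup_add_of_right_tendsto_zero
          (tendsto_setLIntegral_pow_four_annulus hψ hh M),
          limsup_const_add _ _ _ (by isBoundedDefault) (by isBoundedDefault)]

end Sequence

end LevyProcess

/-- For a sequence of Lévy processes `Xₙ` with Lévy measures `Πₙ` such that `Xₙ(1)` converges
in distribution to a standard normal, `μ₄,ₙ = ∫ x⁴ Πₙ(dx) → 0` if and only if
`lim_{M→∞} limsup_n ∫_{|x|>M} x⁴ Πₙ(dx) = 0` (uniform integrability of fourth moments). -/
theorem fourth_moment_tendsto_zero_iff
    {Ω : Type*} [MeasurableSpace Ω] (P : Measure Ω) [IsProbabilityMeasure P]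
    (L : ℕ → LevyProcess P)
    (hconv : ∀ f : BoundedContinuousFunction ℝ ℝ,
      Tendsto (fun n => ∫ x, f x ∂(P.map ((L n).X 1))) atTop
        (nhds (∫ x, f x ∂(gaussianReal 0 1)))) :
    Tendsto (fun n => ∫⁻ x, ENNReal.ofReal (x ^ 4) ∂(L n).ν) atTop (nhds 0)
      ↔ Tendsto (fun M : ℝ =>
          Filter.limsup
            (fun n => ∫⁻ x in {x : ℝ | M < |x|}, ENNReal.ofReal (x ^ 4) ∂(L n).ν)
            atTop)
          atTop (nhds 0) := by
  constructor
  · intro h0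
    have htail : ∀ M : ℝ,
        limsup (fun n => ∫⁻ x in {x : ℝ | M < |x|}, ENNReal.ofReal (x ^ 4) ∂(L n).ν) atTop = 0 :=
      fun M => le_antisymm (h0.limsup_eq ▸ limsup_le_limsup
        (Eventually.of_forall fun n => setLIntegral_le_lintegral _ _)) zero_le
    simp only [htail, tendsto_const_nhds]
  · intro htail
    have hψ := LevyProcess.tendsto_realExponent hconv
    have hsmall : ∀ h > 0, limsup (fun n => ∫⁻ x, ENNReal.ofReal (x ^ 4) ∂(L n).ν) atTop
        ≤ ENNReal.ofReal (Real.pi ^ 2 * h ^ 2 / 2) := fun h hh =>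
      ge_of_tendsto (by simpa using htail.const_add (ENNReal.ofReal (Real.pi ^ 2 * h ^ 2 / 2)))
        (Eventually.of_forall (LevyProcess.limsup_lintegral_pow_four_le hψ hh))
    have hlim : Tendsto (fun h : ℝ => ENNReal.ofReal (Real.pi ^ 2 * h ^ 2 / 2)) (𝓝[>] 0) (𝓝 0) := by
      have := ((by fun_prop : Continuous fun h : ℝ => Real.pi ^ 2 * h ^ 2 / 2).tendsto 0).mono_left
        (nhdsWithin_le_nhds (s := Ioi 0))
      simpa using ENNReal.tendsto_ofReal this
    exact tendsto_of_le_liminf_of_limsup_le zero_le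
      (ge_of_tendsto hlim (eventually_nhdsWithin_of_forall hsmall))
end
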